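/- Under the hypotheses of the two previous descent bounds (approximate gradient accuracy ε₄ ≤ min(ε₁/(2√2), ε₂²/(24L₂)) and approximate Hessian accuracy ε₃ ≤ ε₂/24), the NCG-S update x⁺ (which chooses between the curvature step x - (ε₂/L₂)sign(vᵀg)v and the gradient step x - g/L₁ according to whichever predicted decrease is larger) satisfies f(x) - f(x⁺) ≥ max( (1/(4L₁))‖g‖² - ε₁²/(8L₁), -(ε₂²/(2L₂²))·vᵀHv - 11ε₂³/(48L₂²) ). -/

import Mathlib

/-!
Both candidate steps are analysed by Taylor bounds along the segment they travel. For the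
gradient step the descent lemma of an `L₁`-Lipschitz gradient yields a decrease of
`(‖g‖² / 4 - ‖g - ∇f x‖²) / L₁`. For a step of length `η` along `±v`, the cubic Taylor bound of an
`L₂`-Lipschitz Hessian yields a decrease of at least
`-(η² / 2) ⟪H v, v⟫ - η ‖g - ∇f x‖ - (η² / 2) ‖H - ∇²f x‖ - L₂ η³ / 6`; choosing the sign of the
step opposite to that of `⟪v, g⟫` makes the first-order term harmless. With `η = ε₂ / L₂` the error
terms add up to `11 ε₂³ / (48 L₂²)`, and since the update takes the step with the larger predicted
decrease, it realises the maximum of the two bounds.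
-/

open scoped RealInnerProductSpace

noncomputable def sgn (t : ℝ) : ℝ := if 0 ≤ t then 1 else -1

open InnerProductSpace Set

section Taylor

variable {E F : Type*} [NormedAddCommGroup E] [NormedSpace ℝ E]
  [NormedAddCommGroup F] [NormedSpace ℝ F]

theorem norm_image_one_le_of_norm_deriv_le_mul_pow {G G' : ℝ → F} {C : ℝ} {k : ℕ}
    (hG : ∀ t, HasDerivAt G (G' t) t) (hG0 : G 0 = 0)
    (bound : ∀ t ∈ Ico (0 : ℝ) 1, ‖G' t‖ ≤ C * t ^ k) : ‖G 1‖ ≤ C / (k + 1) := by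
  have hmajorant : ∀ t : ℝ, HasDerivAt (fun t => C * (t ^ (k + 1) / (k + 1))) (C * t ^ k) t := by
    intro t
    refine (((hasDerivAt_pow (k + 1) t).div_const (k + 1 : ℝ)).const_mul C).congr_deriv ?_
    push_cast
    field_simp
  simpa [div_eq_mul_inv] using image_norm_le_of_norm_deriv_right_le_deriv_boundary
    (fun t _ => (hG t).continuousAt.continuousWithinAt) (fun t _ => (hG t).hasDerivWithinAt)
    (by simp [hG0]) hmajorant bound (right_mem_Icc.2 zero_le_one)

theorem norm_image_add_sub_sub_fderiv_le {φ : E → F} (hφ : Differentiable ℝ φ) {L : ℝ}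
    (hlip : ∀ a b, ‖fderiv ℝ φ a - fderiv ℝ φ b‖ ≤ L * ‖a - b‖) (x d : E) :
    ‖φ (x + d) - φ x - fderiv ℝ φ x d‖ ≤ L / 2 * ‖d‖ ^ 2 := by
  have hG : ∀ t : ℝ, HasDerivAt (fun t : ℝ => φ (x + t • d) - φ x - t • fderiv ℝ φ x d)
      (fderiv ℝ φ (x + t • d) d - fderiv ℝ φ x d) t := fun t => by
    have hline : HasDerivAt (fun t : ℝ => x + t • d) d t := by
      simpa using ((hasDerivAt_id t).smul_const d).const_add x
    exact (((hφ _).hasFDerivAt.comp_hasDerivAt t hline).sub_const (φ x)).sub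
      (by simpa using (hasDerivAt_id t).smul_const (fderiv ℝ φ x d))
  have hend := norm_image_one_le_of_norm_deriv_le_mul_pow hG (by simp) (C := L * ‖d‖ ^ 2) (k := 1)
    fun t ht => calc
      ‖fderiv ℝ φ (x + t • d) d - fderiv ℝ φ x d‖
          ≤ ‖fderiv ℝ φ (x + t • d) - fderiv ℝ φ x‖ * ‖d‖ :=
        (fderiv ℝ φ (x + t • d) - fderiv ℝ φ x).le_opNorm d
      _ ≤ L * ‖x + t • d - x‖ * ‖d‖ := by gcongr; exact hlip _ _
      _ = L * ‖d‖ ^ 2 * t ^ 1 := by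
        rw [add_sub_cancel_left, norm_smul, Real.norm_of_nonneg ht.1]; ring
  convert hend using 1
  · simp
  · ring

end Taylor

theorem abs_sgn (t : ℝ) : |sgn t| = 1 := by
  unfold sgn
  split_ifs <;> simp

theorem sgn_mul_self (t : ℝ) : sgn t * t = |t| := by
  unfold sgn
  split_ifs with h
  · simp [abs_of_nonneg h]
  · simp [abs_of_neg (not_le.1 h)]

section InnerProductSpace

variable {E : Type*} [NormedAddCommGroup E] [InnerProductSpace ℝ E]

theorem inner_apply_self_le_add_opNorm_sub (A H : E →L[ℝ] E) {v : E} (hv : ‖v‖ = 1) :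
    ⟪A v, v⟫ ≤ ⟪H v, v⟫ + ‖H - A‖ := by
  have h : |⟪(H - A) v, v⟫| ≤ ‖H - A‖ := by
    simpa [hv] using (abs_real_inner_le_norm _ _).trans
      (mul_le_mul_of_nonneg_right ((H - A).le_opNorm v) (norm_nonneg v))
  rw [sub_apply, inner_sub_left] at h
  linarith [neg_abs_le (⟪H v, v⟫ - ⟪A v, v⟫)]

variable [CompleteSpace E]

theorem fderiv_apply_eq_inner_gradient (f : E → ℝ) (x w : E) :
    fderiv ℝ f x w = ⟪gradient f x, w⟫ := by
  rw [← toDual_gradient, toDual_apply_apply]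

theorem image_add_le_of_lipschitz_gradient {f : E → ℝ} (hf : Differentiable ℝ f) {L : ℝ}
    (hlip : ∀ a b, ‖gradient f a - gradient f b‖ ≤ L * ‖a - b‖) (x d : E) :
    f (x + d) ≤ f x + ⟪gradient f x, d⟫ + L / 2 * ‖d‖ ^ 2 := by
  have hlip_fderiv : ∀ a b, ‖fderiv ℝ f a - fderiv ℝ f b‖ ≤ L * ‖a - b‖ := fun a b => by
    rw [← toDual_gradient, ← toDual_gradient, ← map_sub, LinearIsometryEquiv.norm_map]
    exact hlip a b
  have h := (le_abs_self _).trans (norm_image_add_sub_sub_fderiv_le hf hlip_fderiv x d)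
  rw [fderiv_apply_eq_inner_gradient] at h
  linarith

theorem abs_image_add_sub_taylor_two_le {f : E → ℝ} (hf : Differentiable ℝ f)
    (hf' : Differentiable ℝ (gradient f)) {L : ℝ}
    (hlip : ∀ a b, ‖fderiv ℝ (gradient f) a - fderiv ℝ (gradient f) b‖ ≤ L * ‖a - b‖) (x d : E) :
    |f (x + d) - f x - ⟪gradient f x, d⟫ - ⟪fderiv ℝ (gradient f) x d, d⟫ / 2|
      ≤ L / 6 * ‖d‖ ^ 3 := by
  set A := fderiv ℝ (gradient f) x
  have hG : ∀ t : ℝ, HasDerivAt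
      (fun t : ℝ => f (x + t • d) - f x - t * ⟪gradient f x, d⟫ - t ^ 2 / 2 * ⟪A d, d⟫)
      ⟪gradient f (x + t • d) - gradient f x - t • A d, d⟫ t := fun t => by
    have hline : HasDerivAt (fun t : ℝ => x + t • d) d t := by
      simpa using ((hasDerivAt_id t).smul_const d).const_add x
    have hquad : HasDerivAt (fun t : ℝ => t ^ 2 / 2 * ⟪A d, d⟫) (t * ⟪A d, d⟫) t := by
      refine (((hasDerivAt_pow 2 t).div_const 2).mul_const _).congr_deriv ?_
      ring
    have := ((((hf _).hasFDerivAt.comp_hasDerivAt t hline).sub_const (f x)).sub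
      ((hasDerivAt_id t).mul_const ⟪gradient f x, d⟫)).sub hquad
    rw [fderiv_apply_eq_inner_gradient] at this
    refine this.congr_deriv ?_
    simp only [inner_sub_left, real_inner_smul_left, one_mul]
  have hend :=
    norm_image_one_le_of_norm_deriv_le_mul_pow hG (by simp) (C := L / 2 * ‖d‖ ^ 3) (k := 2)
    fun t ht => calc
      ‖⟪gradient f (x + t • d) - gradient f x - t • A d, d⟫‖
          ≤ ‖gradient f (x + t • d) - gradient f x - t • A d‖ * ‖d‖ := norm_inner_le_norm _ _
      _ ≤ L / 2 * ‖t • d‖ ^ 2 * ‖d‖ := by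
        gcongr
        simpa only [map_smul] using norm_image_add_sub_sub_fderiv_le hf' hlip x (t • d)
      _ = L / 2 * ‖d‖ ^ 3 * t ^ 2 := by
        rw [norm_smul, Real.norm_of_nonneg ht.1]; ring
  rw [Real.norm_eq_abs, one_smul, one_mul, one_pow] at hend
  convert hend using 1
  · ring_nf
  · ring

theorem gradient_step_decrease {f : E → ℝ} (hf : Differentiable ℝ f) {L : ℝ} (hL : 0 < L)
    (hlip : ∀ a b, ‖gradient f a - gradient f b‖ ≤ L * ‖a - b‖) (x g : E) :
    (‖g‖ ^ 2 / 4 - ‖g - gradient f x‖ ^ 2) / L ≤ f x - f (x - L⁻¹ • g) := by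
  set e := g - gradient f x
  have hdescent := image_add_le_of_lipschitz_gradient hf hlip x (-(L⁻¹ • g))
  rw [← sub_eq_add_neg, inner_neg_right, real_inner_smul_right, norm_neg, norm_smul,
    Real.norm_of_nonneg (inv_nonneg.2 hL.le),
    show gradient f x = g - e from (sub_sub_cancel g _).symm, inner_sub_left,
    real_inner_self_eq_norm_sq] at hdescent
  have hquad : L / 2 * (L⁻¹ * ‖g‖) ^ 2 = L⁻¹ * (‖g‖ ^ 2 / 2) := by field_simp
  have hcs : ⟪e, g⟫ ≤ ‖g‖ ^ 2 / 4 + ‖e‖ ^ 2 := by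
    nlinarith [real_inner_le_norm e g, sq_nonneg (‖g‖ / 2 - ‖e‖)]
  calc (‖g‖ ^ 2 / 4 - ‖e‖ ^ 2) / L = L⁻¹ * (‖g‖ ^ 2 / 4 - ‖e‖ ^ 2) := by ring
    _ ≤ L⁻¹ * (‖g‖ ^ 2 - ⟪e, g⟫ - ‖g‖ ^ 2 / 2) :=
        mul_le_mul_of_nonneg_left (by linarith) (inv_nonneg.2 hL.le)
    _ ≤ f x - f (x - L⁻¹ • g) := by linarith

theorem curvature_step_decrease {f : E → ℝ} (hf : Differentiable ℝ f)
    (hf' : Differentiable ℝ (gradient f)) {L : ℝ}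
    (hlip : ∀ a b, ‖fderiv ℝ (gradient f) a - fderiv ℝ (gradient f) b‖ ≤ L * ‖a - b‖)
    (x g v : E) (hv : ‖v‖ = 1) (H : E →L[ℝ] E) {η : ℝ} (hη : 0 ≤ η) :
    -(η ^ 2 / 2) * ⟪H v, v⟫ - η * ‖g - gradient f x‖
        - η ^ 2 / 2 * ‖H - fderiv ℝ (gradient f) x‖ - L / 6 * η ^ 3
      ≤ f x - f (x - (η * sgn ⟪v, g⟫) • v) := by
  set s := sgn ⟪v, g⟫
  set A := fderiv ℝ (gradient f) x
  set e := g - gradient f x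
  have hs : |s| = 1 := abs_sgn _
  have hnorm : ‖(η * s) • v‖ = η := by
    rw [norm_smul, hv, Real.norm_eq_abs, abs_mul, hs, abs_of_nonneg hη, mul_one, mul_one]
  have htaylor := (le_abs_self _).trans
    (abs_image_add_sub_taylor_two_le hf hf' hlip x (-((η * s) • v)))
  rw [← sub_eq_add_neg, norm_neg, hnorm] at htaylor
  have hfirst : ⟪gradient f x, -((η * s) • v)⟫ ≤ η * ‖e‖ := by
    have hse : s * ⟪e, v⟫ ≤ ‖e‖ := (le_abs_self _).trans (by
      simpa [abs_mul, hs, hv] using abs_real_inner_le_norm e v)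
    calc ⟪gradient f x, -((η * s) • v)⟫ = -(η * (s * ⟪v, g⟫)) + η * (s * ⟪e, v⟫) := by
          rw [show gradient f x = g - e from (sub_sub_cancel g _).symm, inner_neg_right,
            real_inner_smul_right, inner_sub_left, real_inner_comm g v]
          ring
      _ ≤ 0 + η * ‖e‖ := by
          rw [sgn_mul_self]
          gcongr
          exact neg_nonpos.2 (by positivity)
      _ = η * ‖e‖ := zero_add _
  have hsecond : ⟪A (-((η * s) • v)), -((η * s) • v)⟫ ≤ η ^ 2 * (⟪H v, v⟫ + ‖H - A‖) := by
    calc ⟪A (-((η * s) • v)), -((η * s) • v)⟫ = η ^ 2 * s ^ 2 * ⟪A v, v⟫ := by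
          rw [map_neg, map_smul, inner_neg_neg, real_inner_smul_left, real_inner_smul_right]
          ring
      _ ≤ η ^ 2 * (⟪H v, v⟫ + ‖H - A‖) := by
          rw [← sq_abs s, hs, one_pow, mul_one]
          gcongr
          exact inner_apply_self_le_add_opNorm_sub A H hv
  linarith

theorem gradient_step_decrease_of_error_le {f : E → ℝ} (hf : Differentiable ℝ f)
    {L ε₁ ε₄ : ℝ} (hL : 0 < L) (hlip : ∀ a b, ‖gradient f a - gradient f b‖ ≤ L * ‖a - b‖)
    (x g : E) (hg : ‖g - gradient f x‖ ≤ ε₄) (hε₄ : ε₄ ≤ ε₁ / (2 * Real.sqrt 2)) :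
    ‖g‖ ^ 2 / (4 * L) - ε₁ ^ 2 / (8 * L) ≤ f x - f (x - L⁻¹ • g) := by
  have herr : ‖g - gradient f x‖ ^ 2 ≤ ε₁ ^ 2 / 8 := calc
    ‖g - gradient f x‖ ^ 2 ≤ (ε₁ / (2 * Real.sqrt 2)) ^ 2 := by gcongr; exact hg.trans hε₄
    _ = ε₁ ^ 2 / 8 := by
      rw [div_pow, mul_pow, Real.sq_sqrt zero_le_two]
      ring
  calc ‖g‖ ^ 2 / (4 * L) - ε₁ ^ 2 / (8 * L) = (‖g‖ ^ 2 / 4 - ε₁ ^ 2 / 8) / L := by ring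
    _ ≤ (‖g‖ ^ 2 / 4 - ‖g - gradient f x‖ ^ 2) / L := by gcongr
    _ ≤ f x - f (x - L⁻¹ • g) := gradient_step_decrease hf hL hlip x g

theorem curvature_step_decrease_of_error_le {f : E → ℝ} (hf : Differentiable ℝ f)
    (hf' : Differentiable ℝ (gradient f)) {L ε₂ ε₄ : ℝ} (hL : 0 < L) (hε₂ : 0 < ε₂)
    (hlip : ∀ a b, ‖fderiv ℝ (gradient f) a - fderiv ℝ (gradient f) b‖ ≤ L * ‖a - b‖)
    (x g v : E) (hv : ‖v‖ = 1) (hg : ‖g - gradient f x‖ ≤ ε₄) (hε₄ : ε₄ ≤ ε₂ ^ 2 / (24 * L))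
    (H : E →L[ℝ] E) (hH : ‖H - fderiv ℝ (gradient f) x‖ ≤ ε₂ / 24) :
    -(ε₂ ^ 2 / (2 * L ^ 2)) * ⟪H v, v⟫ - 11 * ε₂ ^ 3 / (48 * L ^ 2)
      ≤ f x - f (x - (ε₂ / L * sgn ⟪v, g⟫) • v) := by
  refine le_trans ?_ (curvature_step_decrease hf hf' hlip x g v hv H (by positivity))
  have hgrad : ε₂ / L * ‖g - gradient f x‖ ≤ ε₂ / L * (ε₂ ^ 2 / (24 * L)) := by
    gcongr
    exact hg.trans hε₄
  have hhess : (ε₂ / L) ^ 2 / 2 * ‖H - fderiv ℝ (gradient f) x‖ ≤ (ε₂ / L) ^ 2 / 2 * (ε₂ / 24) := by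
    gcongr
  -- `11 = 2 + 1 + 8`: gradient error, Hessian error and cubic remainder
  have hsplit : 11 * ε₂ ^ 3 / (48 * L ^ 2)
      = ε₂ / L * (ε₂ ^ 2 / (24 * L)) + (ε₂ / L) ^ 2 / 2 * (ε₂ / 24) + L / 6 * (ε₂ / L) ^ 3 := by
    field_simp
    ring
  have hquad : ε₂ ^ 2 / (2 * L ^ 2) = (ε₂ / L) ^ 2 / 2 := by ring
  rw [hsplit, hquad]
  linarith

end InnerProductSpace

theorem stmt_5_general {d : ℕ} (L₁ L₂ ε₁ ε₂ ε₄ : ℝ)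
    (hL₁ : 0 < L₁) (hL₂ : 0 < L₂) (hε₂ : 0 < ε₂)
    (f : EuclideanSpace ℝ (Fin d) → ℝ)
    (hf : Differentiable ℝ f) (hf' : Differentiable ℝ (gradient f))
    (hglip : ∀ x y, ‖gradient f x - gradient f y‖ ≤ L₁ * ‖x - y‖)
    (hHlip : ∀ x y, ‖fderiv ℝ (gradient f) x - fderiv ℝ (gradient f) y‖ ≤ L₂ * ‖x - y‖)
    (x g v : EuclideanSpace ℝ (Fin d)) (hv : ‖v‖ = 1)
    (hg : ‖g - gradient f x‖ ≤ ε₄)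
    (hε₄ : ε₄ ≤ min (ε₁ / (2 * Real.sqrt 2)) (ε₂ ^ 2 / (24 * L₂)))
    (H : EuclideanSpace ℝ (Fin d) →L[ℝ] EuclideanSpace ℝ (Fin d))
    (hH : ‖H - fderiv ℝ (gradient f) x‖ ≤ ε₂ / 24)
    (xplus : EuclideanSpace ℝ (Fin d))
    (hxplus : xplus =
      if -(ε₂ ^ 2 / (2 * L₂ ^ 2)) * ⟪H v, v⟫ - 11 * ε₂ ^ 3 / (48 * L₂ ^ 2)
          > ‖g‖ ^ 2 / (4 * L₁) - ε₁ ^ 2 / (8 * L₁)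
      then x - (ε₂ / L₂ * sgn ⟪v, g⟫) • v
      else x - L₁⁻¹ • g) :
    f x - f xplus ≥
      max ((1 / (4 * L₁)) * ‖g‖ ^ 2 - ε₁ ^ 2 / (8 * L₁))
        (-(ε₂ ^ 2 / (2 * L₂ ^ 2)) * ⟪H v, v⟫ - 11 * ε₂ ^ 3 / (48 * L₂ ^ 2)) := by
  subst hxplus
  rw [one_div_mul_eq_div]
  split_ifs with hcurv
  · rw [max_eq_right hcurv.le]
    exact curvature_step_decrease_of_error_le hf hf' hL₂ hε₂ hHlip x g v hv hg
      (hε₄.trans (min_le_right _ _)) H hH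
  · rw [max_eq_left (not_lt.1 hcurv)]
    exact gradient_step_decrease_of_error_le hf hL₁ hglip x g hg (hε₄.trans (min_le_left _ _))

theorem stmt_5 {d : ℕ} (L₁ L₂ ε₁ ε₂ ε₄ : ℝ)
    (hL₁ : 0 < L₁) (hL₂ : 0 < L₂) (hε₁ : 0 < ε₁) (hε₂ : 0 < ε₂)
    (f : EuclideanSpace ℝ (Fin d) → ℝ)
    (hf : Differentiable ℝ f) (hf' : Differentiable ℝ (gradient f))
    (hglip : ∀ x y, ‖gradient f x - gradient f y‖ ≤ L₁ * ‖x - y‖)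
    (hHlip : ∀ x y, ‖fderiv ℝ (gradient f) x - fderiv ℝ (gradient f) y‖ ≤ L₂ * ‖x - y‖)
    (x g v : EuclideanSpace ℝ (Fin d)) (hv : ‖v‖ = 1)
    (hg : ‖g - gradient f x‖ ≤ ε₄)
    (hε₄ : ε₄ ≤ min (ε₁ / (2 * Real.sqrt 2)) (ε₂ ^ 2 / (24 * L₂)))
    (H : EuclideanSpace ℝ (Fin d) →L[ℝ] EuclideanSpace ℝ (Fin d))
    (hHsym : IsSelfAdjoint H) (hH : ‖H - fderiv ℝ (gradient f) x‖ ≤ ε₂ / 24)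
    (xplus : EuclideanSpace ℝ (Fin d))
    (hxplus : xplus =
      if -(ε₂ ^ 2 / (2 * L₂ ^ 2)) * ⟪H v, v⟫ - 11 * ε₂ ^ 3 / (48 * L₂ ^ 2)
          > ‖g‖ ^ 2 / (4 * L₁) - ε₁ ^ 2 / (8 * L₁)
      then x - (ε₂ / L₂ * sgn ⟪v, g⟫) • v
      else x - L₁⁻¹ • g) :
    f x - f xplus ≥
      max ((1 / (4 * L₁)) * ‖g‖ ^ 2 - ε₁ ^ 2 / (8 * L₁))
        (-(ε₂ ^ 2 / (2 * L₂ ^ 2)) * ⟪H v, v⟫ - 11 * ε₂ ^ 3 / (48 * L₂ ^ 2)) :=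
  stmt_5_general L₁ L₂ ε₁ ε₂ ε₄ hL₁ hL₂ hε₂ f hf hf' hglip hHlip x g v hv hg hε₄ H hH xplus hxplus
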